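/- arXiv:1710.07946 — 5 statements merged into one kernel-verified Lean document; each statement's English description precedes it below -/
import Mathlib

section
/- Suppose W = CUR where C consists of l columns of the m×n matrix W, R consists of k rows of W, and U is an l×k matrix. Then rank(C) = rank(R) = rank(W) = rank(W_{k,l}), where W_{k,l} is the k×l submatrix of W common to C and R. -/
open Matrix BigOperators Finset

noncomputable section

/-- `P` is the Moore–Penrose pseudoinverse of `A` (the four Penrose conditions). -/
def Penrose {m n : ℕ} (A : Matrix (Fin m) (Fin n) ℂ) (P : Matrix (Fin n) (Fin m) ℂ) : Prop :=
  A * P * A = A ∧ P * A * P = P ∧ (A * P)ᴴ = A * P ∧ (P * A)ᴴ = P * A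

/-- spectral (l2 operator) norm of a matrix -/
def specNorm {m n : ℕ} (A : Matrix (Fin m) (Fin n) ℂ) : ℝ :=
  ‖LinearMap.toContinuousLinearMap (Matrix.toEuclideanLin A)‖

/-- `σ` lists the singular values of `A` in nonincreasing order, padded with zeros. -/
def IsSVDSeq {m n : ℕ} (A : Matrix (Fin m) (Fin n) ℂ) (σ : ℕ → ℝ) : Prop :=
  Antitone σ ∧ (∀ j, 0 ≤ σ j) ∧ (∀ j, min m n ≤ j → σ j = 0) ∧
  ∃ U : Matrix (Fin m) (Fin m) ℂ, ∃ V : Matrix (Fin n) (Fin n) ℂ,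
    U ∈ Matrix.unitaryGroup (Fin m) ℂ ∧ V ∈ Matrix.unitaryGroup (Fin n) ℂ ∧
    A = U * (Matrix.of fun (i : Fin m) (j : Fin n) => if (i : ℕ) = (j : ℕ) then (σ (i : ℕ) : ℂ) else 0) * Vᴴ

/-- the volume of a matrix: the product of its singular values, i.e.
`√(det (M Mᴴ))` for wide matrices and `√(det (Mᴴ M))` for tall ones. -/
def vol {m n : Type*} [Fintype m] [Fintype n] [DecidableEq m] [DecidableEq n]
    (M : Matrix m n ℂ) : ℝ :=
  if Fintype.card m ≤ Fintype.card n then Real.sqrt (M * Mᴴ).det.re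
  else Real.sqrt (Mᴴ * M).det.re

lemma sub_row {m n k : ℕ} (W : Matrix (Fin m) (Fin n) ℂ) (f : Fin k → Fin m) :
    W.submatrix f id = (1 : Matrix (Fin m) (Fin m) ℂ).submatrix f id * W := by
  ext i j; simp [mul_apply, one_apply]

lemma sub_col {m n l : ℕ} (W : Matrix (Fin m) (Fin n) ℂ) (g : Fin l → Fin n) :
    W.submatrix id g = W * (1 : Matrix (Fin n) (Fin n) ℂ).submatrix id g := by
  ext i j; simp [mul_apply, one_apply]

lemma rank_sub_row_le {m n k : ℕ} (W : Matrix (Fin m) (Fin n) ℂ) (f : Fin k → Fin m) :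
    (W.submatrix f id).rank ≤ W.rank := by
  rw [sub_row]; exact rank_mul_le_right _ _

lemma rank_sub_col_le {m n l : ℕ} (W : Matrix (Fin m) (Fin n) ℂ) (g : Fin l → Fin n) :
    (W.submatrix id g).rank ≤ W.rank := by
  rw [sub_col]; exact rank_mul_le_left _ _

/-- In an exact CUR decomposition, C, R, W and the generator share the same rank. -/
theorem stmt_1 {m n k l : ℕ} (W : Matrix (Fin m) (Fin n) ℂ)
    (ι : Fin k ↪ Fin m) (κ : Fin l ↪ Fin n) (U : Matrix (Fin l) (Fin k) ℂ)
    (hCUR : W = W.submatrix id ⇑κ * U * W.submatrix ⇑ι id) :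
    (W.submatrix id ⇑κ).rank = W.rank ∧ (W.submatrix ⇑ι id).rank = W.rank ∧
      (W.submatrix ⇑ι ⇑κ).rank = W.rank := by
  set C := W.submatrix id ⇑κ with hC
  set R := W.submatrix ⇑ι id with hR
  set K := W.submatrix ⇑ι ⇑κ with hK
  have hWC : W.rank ≤ C.rank := by
    conv_lhs => rw [hCUR]
    exact le_trans (rank_mul_le_left _ _) (rank_mul_le_left _ _)
  have hWR : W.rank ≤ R.rank := by
    conv_lhs => rw [hCUR]
    exact rank_mul_le_right _ _
  have hCW : C.rank ≤ W.rank := rank_sub_col_le W _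
  have hRW : R.rank ≤ W.rank := rank_sub_row_le W _
  have hKR : K.rank ≤ R.rank := by
    have : K = R.submatrix id ⇑κ := rfl
    rw [this]; exact rank_sub_col_le R _
  have hRK : R.rank ≤ K.rank := by
    have h1 : R = K * U * R := by
      conv_lhs => rw [hR, hCUR]
      rw [sub_row (W.submatrix id ⇑κ * U * W.submatrix ⇑ι id) ι,
        ← Matrix.mul_assoc, ← Matrix.mul_assoc, ← sub_row]
      rfl
    conv_lhs => rw [h1]
    exact le_trans (rank_mul_le_left _ _) (rank_mul_le_left _ _)
  exact ⟨le_antisymm hCW hWC, le_antisymm hRW hWR,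
    le_antisymm (hKR.trans hRW) (hWR.trans hRK)⟩
end
end

section
/- Let W be an m×n matrix of rank r, and let I ⊆ {1,…,m} and J ⊆ {1,…,n} be index sets of size r such that W, C = W_{:,J}, and R = W_{I,:} all have rank r. Then W = C·W_{I,J}^{-1}·R if and only if the r×r submatrix W_{I,J} is invertible with U = W_{I,J}^{-1} as the nucleus; in particular, if W_{I,J} is invertible then W = C·W_{I,J}^{-1}·R. -/
open Matrix BigOperators Finset

noncomputable section

-- helper: if a column submatrix has the same rank, it spans, and W factors through it
lemma cols_factor {m n r : ℕ} (A : Matrix (Fin m) (Fin n) ℂ) (κ : Fin r ↪ Fin n)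
    (h : (A.submatrix id ⇑κ).rank = A.rank) :
    ∃ X : Matrix (Fin r) (Fin n) ℂ, A = A.submatrix id ⇑κ * X := by
  set B := A.submatrix id ⇑κ with hB
  have hr : LinearMap.range B.mulVecLin = LinearMap.range A.mulVecLin := by
    have hle : LinearMap.range B.mulVecLin ≤ LinearMap.range A.mulVecLin := by
      rintro x ⟨v, rfl⟩
      refine ⟨fun k => ∑ j, if κ j = k then v j else 0, ?_⟩
      ext i
      simp only [mulVecLin_apply, mulVec, dotProduct, hB, submatrix_apply, id_eq]
      simp_rw [Finset.mul_sum]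
      rw [Finset.sum_comm]
      simp [mul_ite, Finset.sum_ite_eq]
    exact Submodule.eq_of_le_of_finrank_eq hle h
  have hcol : ∀ j : Fin n, ∃ x : Fin r → ℂ, B.mulVecLin x = fun i => A i j := by
    intro j
    have : (fun i => A i j) ∈ LinearMap.range A.mulVecLin := by
      refine ⟨Pi.single j 1, ?_⟩
      ext i
      simp [mulVecLin_apply, mulVec_single]
    rw [← hr] at this
    exact this
  choose x hx using hcol
  refine ⟨Matrix.of fun k j => x j k, ?_⟩
  ext i j
  have := congrFun (hx j) i
  simp only [mulVecLin_apply, mulVec, dotProduct] at this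
  simp [Matrix.mul_apply, ← this]

lemma rows_factor {m n r : ℕ} (A : Matrix (Fin m) (Fin n) ℂ) (ι : Fin r ↪ Fin m)
    (h : (A.submatrix ⇑ι id).rank = A.rank) :
    ∃ Y : Matrix (Fin m) (Fin r) ℂ, A = Y * A.submatrix ⇑ι id := by
  have h' : (Aᵀ.submatrix id ⇑ι).rank = Aᵀ.rank := by
    have : Aᵀ.submatrix id ⇑ι = (A.submatrix ⇑ι id)ᵀ := by ext i j; simp
    rw [this, Matrix.rank_transpose, Matrix.rank_transpose, h]
  obtain ⟨X, hX⟩ := cols_factor Aᵀ ι h'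
  have hsub : Aᵀ.submatrix id ⇑ι = (A.submatrix ⇑ι id)ᵀ := by ext i j; simp
  rw [hsub] at hX
  have := congrArg Matrix.transpose hX
  rw [Matrix.transpose_transpose, Matrix.transpose_mul, Matrix.transpose_transpose] at this
  exact ⟨Xᵀ, this⟩

lemma isUnit_of_rank_eq {r : ℕ} (G : Matrix (Fin r) (Fin r) ℂ) (h : G.rank = r) :
    IsUnit G := by
  rw [← Matrix.mulVec_surjective_iff_isUnit]
  have : LinearMap.range G.mulVecLin = ⊤ := by
    apply Submodule.eq_top_of_finrank_eq
    rw [← Matrix.rank, h]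
    simp [Module.finrank_fintype_fun_eq_card]
  intro y
  obtain ⟨x, hx⟩ := this ▸ Submodule.mem_top (x := y) (R := ℂ)
  exact ⟨x, hx⟩

lemma submul_left {m n r k : ℕ} (A : Matrix (Fin m) (Fin n) ℂ) (B : Matrix (Fin n) (Fin k) ℂ)
    (ι : Fin r ↪ Fin m) : (A * B).submatrix ⇑ι id = A.submatrix ⇑ι id * B := by
  ext i j; simp [Matrix.mul_apply]

lemma submul_both {m n r k p : ℕ} (A : Matrix (Fin m) (Fin n) ℂ) (B : Matrix (Fin n) (Fin k) ℂ)
    (ι : Fin r ↪ Fin m) (κ : Fin p ↪ Fin k) :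
    (A * B).submatrix ⇑ι ⇑κ = A.submatrix ⇑ι id * B.submatrix id ⇑κ := by
  ext i j; simp [Matrix.mul_apply]

lemma submul_right {m n r k : ℕ} (A : Matrix (Fin m) (Fin n) ℂ) (B : Matrix (Fin n) (Fin k) ℂ)
    (κ : Fin r ↪ Fin k) : (A * B).submatrix id ⇑κ = A * B.submatrix id ⇑κ := by
  ext i j; simp [Matrix.mul_apply]

/-- Exact CUR decomposition with nucleus the inverse of the generator. -/
theorem stmt_2 {m n r : ℕ} (W : Matrix (Fin m) (Fin n) ℂ)
    (ι : Fin r ↪ Fin m) (κ : Fin r ↪ Fin n)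
    (hW : W.rank = r) (hC : (W.submatrix id ⇑κ).rank = r)
    (hR : (W.submatrix ⇑ι id).rank = r) :
    (∀ U : Matrix (Fin r) (Fin r) ℂ,
      W = W.submatrix id ⇑κ * U * W.submatrix ⇑ι id ↔
        IsUnit (W.submatrix ⇑ι ⇑κ) ∧ U = (W.submatrix ⇑ι ⇑κ)⁻¹) ∧
    (IsUnit (W.submatrix ⇑ι ⇑κ) →
      W = W.submatrix id ⇑κ * (W.submatrix ⇑ι ⇑κ)⁻¹ * W.submatrix ⇑ι id) := by
  set C := W.submatrix id ⇑κ with hCdef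
  set R := W.submatrix ⇑ι id with hRdef
  set G := W.submatrix ⇑ι ⇑κ with hGdef
  obtain ⟨X, hX⟩ := cols_factor W κ (by rw [hW, hC])
  obtain ⟨Y, hY⟩ := rows_factor W ι (by rw [hW, hR])
  have hCG : C.submatrix ⇑ι id = G := by ext i j; simp [hCdef, hGdef]
  have hRG : R.submatrix id ⇑κ = G := by ext i j; simp [hRdef, hGdef]
  have hGX : R = G * X := by
    rw [hRdef]; conv_lhs => rw [hX]
    rw [submul_left, hCG]
  have hGunit : IsUnit G := by
    apply isUnit_of_rank_eq
    refine le_antisymm ?_ ?_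
    · simpa using G.rank_le_width
    · calc r = R.rank := hR.symm
        _ ≤ G.rank := by rw [hGX]; exact Matrix.rank_mul_le_left G X
  have hmain : W = C * G⁻¹ * R := by
    rw [hGX, hX, ← Matrix.mul_assoc, Matrix.mul_assoc (C * G⁻¹) G X,
      Matrix.mul_assoc C G⁻¹ (G * X), ← Matrix.mul_assoc G⁻¹ G X,
      Matrix.nonsing_inv_mul G (Matrix.isUnit_iff_isUnit_det G |>.mp hGunit),
      Matrix.one_mul]
  refine ⟨fun U => ⟨fun hU => ⟨hGunit, ?_⟩, fun ⟨hu, hU⟩ => by rw [hU]; exact hmain⟩,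
    fun _ => hmain⟩
  have hGUG : G = G * U * G := by
    conv_lhs => rw [hGdef, hU]
    rw [submul_both, submul_left, hCG, hRG]
  have hdet := Matrix.isUnit_iff_isUnit_det G |>.mp hGunit
  calc U = G⁻¹ * (G * U * G) * G⁻¹ := by
        rw [← Matrix.mul_assoc, ← Matrix.mul_assoc, Matrix.nonsing_inv_mul G hdet,
          Matrix.one_mul, Matrix.mul_assoc, Matrix.mul_nonsing_inv G hdet, Matrix.mul_one]
    _ = G⁻¹ * G * G⁻¹ := by rw [← hGUG]
    _ = G⁻¹ := by rw [Matrix.nonsing_inv_mul G hdet, Matrix.one_mul]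
end
end

section
/- If W = GH for an m×q matrix G and a q×n matrix H with q = min{m,n}, then v₂(W) = v₂(G)·v₂(H), where v₂(M) := ∏_{j=1}^{min(rows,cols)} σ_j(M) is the volume of M. Moreover if q < min{m,n} then v₂(W) = 0. -/
open Matrix BigOperators Finset

noncomputable section

lemma diag_wide {m n : ℕ} (hmn : m ≤ n) (σ : ℕ → ℝ) :
    (Matrix.of fun (i : Fin m) (j : Fin n) => if (i : ℕ) = (j : ℕ) then (σ (i : ℕ) : ℂ) else 0) *
      (Matrix.of fun (i : Fin m) (j : Fin n) => if (i : ℕ) = (j : ℕ) then (σ (i : ℕ) : ℂ) else 0)ᴴ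
    = Matrix.diagonal (fun i : Fin m => ((σ (i : ℕ) : ℂ))^2) := by
  ext i k
  simp only [Matrix.mul_apply, Matrix.conjTranspose_apply, Matrix.of_apply, Matrix.diagonal_apply]
  by_cases h : i = k
  · subst h
    rw [Finset.sum_eq_single (Fin.castLE hmn i)]
    · simp [Fin.castLE, sq]
    · intro b _ hb
      have : (i : ℕ) ≠ (b : ℕ) := by
        intro he; apply hb; ext; simp [Fin.castLE, ← he]
      simp [this]
    · simp
  · have hik : (i : ℕ) ≠ (k : ℕ) := fun he => h (Fin.ext he)
    simp only [if_neg h]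
    apply Finset.sum_eq_zero
    intro b _
    by_cases h1 : (i : ℕ) = (b : ℕ)
    · have : (k : ℕ) ≠ (b : ℕ) := by rw [← h1]; exact fun he => hik he.symm
      simp [this]
    · simp [h1]

lemma svd_wide {m n : ℕ} (hmn : m ≤ n) (A : Matrix (Fin m) (Fin n) ℂ) (σ : ℕ → ℝ)
    (h : IsSVDSeq A σ) :
    (A * Aᴴ).det = ((∏ j ∈ Finset.range m, σ j : ℝ) : ℂ)^2 := by
  obtain ⟨-, -, -, U, V, hU, hV, hA⟩ := h
  set D := (Matrix.of fun (i : Fin m) (j : Fin n) => if (i : ℕ) = (j : ℕ) then (σ (i : ℕ) : ℂ) else 0)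
  have hVV : Vᴴ * V = 1 := by
    have := hV.1; rwa [Matrix.star_eq_conjTranspose] at this
  have hUU : Uᴴ * U = 1 := by
    have := hU.1; rwa [Matrix.star_eq_conjTranspose] at this
  have : A * Aᴴ = U * (D * Dᴴ) * Uᴴ := by
    rw [hA]
    simp only [Matrix.conjTranspose_mul, Matrix.conjTranspose_conjTranspose]
    have h1 : Vᴴ * (V * (Dᴴ * Uᴴ)) = Dᴴ * Uᴴ := by
      rw [← Matrix.mul_assoc, hVV, Matrix.one_mul]
    simp only [Matrix.mul_assoc, h1]
  rw [this, diag_wide hmn σ, Matrix.det_mul, Matrix.det_mul, Matrix.det_diagonal]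
  rw [mul_comm, ← mul_assoc, ← Matrix.det_mul, hUU, Matrix.det_one, one_mul]
  push_cast
  rw [← Fin.prod_univ_eq_prod_range (fun j => (σ j : ℂ)) m]
  simp [Finset.prod_pow]

lemma IsSVDSeq.conjT {m n : ℕ} {A : Matrix (Fin m) (Fin n) ℂ} {σ : ℕ → ℝ}
    (h : IsSVDSeq A σ) : IsSVDSeq Aᴴ σ := by
  obtain ⟨h1, h2, h3, U, V, hU, hV, hA⟩ := h
  refine ⟨h1, h2, fun j hj => h3 j (by rwa [min_comm]), V, U, hV, hU, ?_⟩
  rw [hA]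
  simp only [Matrix.conjTranspose_mul, Matrix.conjTranspose_conjTranspose, Matrix.mul_assoc]
  congr 2
  ext i j
  simp only [Matrix.conjTranspose_apply, Matrix.of_apply]
  by_cases hij : (j : ℕ) = (i : ℕ)
  · rw [if_pos hij, if_pos hij.symm, hij]; simp
  · rw [if_neg hij, if_neg (fun he => hij he.symm)]; simp

lemma prod_mul_of_wide {m n : ℕ} (hmn : m ≤ n)
    (G : Matrix (Fin m) (Fin m) ℂ) (H : Matrix (Fin m) (Fin n) ℂ) (σW σG σH : ℕ → ℝ)
    (hW : IsSVDSeq (G * H) σW) (hG : IsSVDSeq G σG) (hH : IsSVDSeq H σH) :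
    ∏ j ∈ Finset.range m, σW j = (∏ j ∈ Finset.range m, σG j) * ∏ j ∈ Finset.range m, σH j := by
  have e1 := svd_wide hmn (G * H) σW hW
  have e2 := svd_wide (le_refl m) G σG hG
  have e3 := svd_wide hmn H σH hH
  have e4 : (G * H * (G * H)ᴴ).det = (G * Gᴴ).det * (H * Hᴴ).det := by
    rw [Matrix.conjTranspose_mul,
      show G * H * (Hᴴ * Gᴴ) = G * (H * Hᴴ) * Gᴴ by simp only [Matrix.mul_assoc],
      Matrix.det_mul, Matrix.det_mul, Matrix.det_mul]
    ring
  rw [e1, e2, e3] at e4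
  have e5 : (((∏ j ∈ Finset.range m, σW j)^2 : ℝ) : ℂ)
      = (((((∏ j ∈ Finset.range m, σG j) * ∏ j ∈ Finset.range m, σH j))^2 : ℝ) : ℂ) := by
    push_cast at e4 ⊢; rw [e4]; ring
  have e6 := Complex.ofReal_injective e5
  have nW : 0 ≤ ∏ j ∈ Finset.range m, σW j :=
    Finset.prod_nonneg fun j _ => hW.2.1 j
  have nG : 0 ≤ ∏ j ∈ Finset.range m, σG j :=
    Finset.prod_nonneg fun j _ => hG.2.1 j
  have nH : 0 ≤ ∏ j ∈ Finset.range m, σH j :=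
    Finset.prod_nonneg fun j _ => hH.2.1 j
  nlinarith [e6, nW, nG, nH, mul_nonneg nG nH]

lemma prod_zero_of_wide {m n q : ℕ} (hmn : m ≤ n) (hq : q < m)
    (G : Matrix (Fin m) (Fin q) ℂ) (H : Matrix (Fin q) (Fin n) ℂ) (σW : ℕ → ℝ)
    (hW : IsSVDSeq (G * H) σW) :
    ∏ j ∈ Finset.range m, σW j = 0 := by
  have e1 := svd_wide hmn (G * H) σW hW
  have hdet : (G * H * (G * H)ᴴ).det = 0 := by
    by_contra hne
    have hunit : IsUnit (G * H * (G * H)ᴴ) := by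
      rw [Matrix.isUnit_iff_isUnit_det]
      exact Ne.isUnit hne
    have hr : (G * H * (G * H)ᴴ).rank = Fintype.card (Fin m) :=
      Matrix.rank_of_isUnit _ hunit
    have hr2 : (G * H * (G * H)ᴴ).rank ≤ (G * H).rank :=
      Matrix.rank_mul_le_left _ _
    have hr3 : (G * H).rank ≤ G.rank := Matrix.rank_mul_le_left G H
    have hr4 : G.rank ≤ Fintype.card (Fin q) := Matrix.rank_le_card_width G
    simp only [Fintype.card_fin] at hr hr4
    omega
  rw [hdet] at e1
  have h0 : ((∏ j ∈ Finset.range m, σW j : ℝ) : ℂ) = 0 := by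
    have h2 : ((∏ j ∈ Finset.range m, σW j : ℝ) : ℂ) ^ 2 = 0 := e1.symm
    exact pow_eq_zero_iff two_ne_zero |>.mp h2
  exact Complex.ofReal_eq_zero.mp h0

/-- Multiplicativity of the volume: v₂(GH) = v₂(G)·v₂(H) when q = min{m,n},
and v₂(GH) = 0 when q < min{m,n}. -/
theorem stmt_6 {m q n : ℕ}
    (G : Matrix (Fin m) (Fin q) ℂ) (H : Matrix (Fin q) (Fin n) ℂ)
    (σW σG σH : ℕ → ℝ)
    (hW : IsSVDSeq (G * H) σW) (hG : IsSVDSeq G σG) (hH : IsSVDSeq H σH) :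
    (q = min m n → ∏ j ∈ Finset.range (min m n), σW j
        = (∏ j ∈ Finset.range q, σG j) * ∏ j ∈ Finset.range q, σH j) ∧
    (q < min m n → ∏ j ∈ Finset.range (min m n), σW j = 0) := by
  constructor
  · intro hq
    rcases le_total m n with hmn | hnm
    · have hm : min m n = m := min_eq_left hmn
      rw [hm] at hq ⊢
      subst hq
      exact prod_mul_of_wide hmn G H σW σG σH hW hG hH
    · have hn : min m n = n := min_eq_right hnm
      rw [hn] at hq ⊢
      subst hq
      have hW' : IsSVDSeq (Hᴴ * Gᴴ) σW := by
        rw [← Matrix.conjTranspose_mul]; exact hW.conjT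
      have := prod_mul_of_wide hnm Hᴴ Gᴴ σW σH σG hW' hH.conjT hG.conjT
      rw [this]; ring
  · intro hq
    rcases le_total m n with hmn | hnm
    · rw [min_eq_left hmn] at hq ⊢
      exact prod_zero_of_wide hmn hq G H σW hW
    · rw [min_eq_right hnm] at hq ⊢
      have hW' : IsSVDSeq (Hᴴ * Gᴴ) σW := by
        rw [← Matrix.conjTranspose_mul]; exact hW.conjT
      exact prod_zero_of_wide hnm hq Hᴴ Gᴴ σW hW'
end
end

section
/- Let U be an r×r invertible submatrix of an r×n matrix W = (U | V'), r ≤ n, and suppose U has column-wise locally h-maximal volume in W for h ≥ 1. Then U has h̃-maximal volume among all r×r submatrices of W, for h̃ = h^r · r^{r/2}. -/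
/-!
Write `W = U * (1 | U⁻¹ V')`. By Cramer's rule the entries of `U⁻¹ V'` are the ratios
`det (U with one column replaced by a column of V') / det U`, so local `h`-maximality bounds every
entry of `U⁻¹ W` by `h` (the identity block needs `1 ≤ h`). Each `r × r` submatrix of `W` is `U`
times the corresponding submatrix of `U⁻¹ W`, whose determinant Hadamard's inequality bounds by
`(√r * h) ^ r`.
-/

open Matrix BigOperators Finset

noncomputable section

theorem vol_eq_norm_det {k : Type*} [Fintype k] [DecidableEq k] (A : Matrix k k ℂ) :
    vol A = ‖A.det‖ := by
  rw [vol, if_pos le_rfl, det_mul, det_conjTranspose, Complex.star_def, Complex.mul_conj,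
    Complex.ofReal_re, Complex.normSq_eq_norm_sq, Real.sqrt_sq (norm_nonneg _)]

/-- No invertibility is needed: if `A.det = 0` then `A⁻¹ = 0` and both sides vanish. -/
theorem Matrix.inv_mul_apply_eq_det_updateCol_div {K n m : Type*} [Field K] [Fintype n]
    [DecidableEq n] (A : Matrix n n K) (B : Matrix n m K) (i : n) (j : m) :
    (A⁻¹ * B) i j = (A.updateCol i fun k => B k j).det / A.det := by
  change (A⁻¹ *ᵥ fun k => B k j) i = _
  rw [inv_def, Ring.inverse_eq_inv, Matrix.smul_mulVec, ← cramer_eq_adjugate_mulVec, Pi.smul_apply,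
    cramer_apply, smul_eq_mul, inv_mul_eq_div]

theorem Matrix.norm_det_le_prod_norm_col_fin {𝕜 : Type*} [RCLike 𝕜] {n : ℕ}
    (M : Matrix (Fin n) (Fin n) 𝕜) :
    ‖M.det‖ ≤ ∏ j, ‖WithLp.toLp 2 (Mᵀ j)‖ := by
  set f : Fin n → EuclideanSpace 𝕜 (Fin n) := fun j => WithLp.toLp 2 (Mᵀ j)
  have hdim : Module.finrank 𝕜 (EuclideanSpace 𝕜 (Fin n)) = Fintype.card (Fin n) := by simp
  set b := InnerProductSpace.gramSchmidtOrthonormalBasis hdim f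
  set e := EuclideanSpace.basisFun (Fin n) 𝕜
  have hM : M.det = e.toBasis.det b * b.toBasis.det f := by
    simp only [Module.Basis.det_apply]
    rw [← det_mul, ← b.coe_toBasis, Module.Basis.toMatrix_mul_toMatrix]
    rfl
  -- Gram–Schmidt makes the coordinate matrix of `f` triangular with diagonal `⟪b i, f i⟫`.
  rw [hM, norm_mul, OrthonormalBasis.det_to_matrix_orthonormalBasis, one_mul,
    InnerProductSpace.gramSchmidtOrthonormalBasis_det, norm_prod]
  gcongr with i
  simpa [b.orthonormal.1 i] using norm_inner_le_norm (𝕜 := 𝕜) (b i) (f i)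

theorem Matrix.norm_det_le_prod_norm_col {𝕜 ι : Type*} [RCLike 𝕜] [Fintype ι] [DecidableEq ι]
    (M : Matrix ι ι 𝕜) :
    ‖M.det‖ ≤ ∏ j, ‖WithLp.toLp 2 (Mᵀ j)‖ := by
  set e := Fintype.equivFin ι
  have hfin := (reindex e e M).norm_det_le_prod_norm_col_fin
  rw [det_reindex_self] at hfin
  refine hfin.trans_eq ?_
  rw [← e.symm.prod_comp]
  refine Finset.prod_congr rfl fun j _ => ?_
  simp only [EuclideanSpace.norm_eq]
  rw [← e.symm.sum_comp]
  rfl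

theorem Matrix.norm_det_le_of_forall_norm_le {𝕜 ι : Type*} [RCLike 𝕜] [Fintype ι] [DecidableEq ι]
    {M : Matrix ι ι 𝕜} {c : ℝ} (hM : ∀ i j, ‖M i j‖ ≤ c) :
    ‖M.det‖ ≤ (√(Fintype.card ι) * c) ^ Fintype.card ι := by
  have hcol : ∀ j, ‖WithLp.toLp 2 (Mᵀ j)‖ ≤ √(Fintype.card ι) * c := fun j => by
    have hc : 0 ≤ c := (norm_nonneg _).trans (hM j j)
    rw [EuclideanSpace.norm_eq, ← Real.sqrt_sq hc, ← Real.sqrt_mul (Nat.cast_nonneg _)]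
    gcongr
    calc ∑ i, ‖M i j‖ ^ 2 ≤ ∑ _i : ι, c ^ 2 := by
          gcongr with i; exact hM i j
      _ = Fintype.card ι * c ^ 2 := by simp
  calc ‖M.det‖ ≤ ∏ j, ‖WithLp.toLp 2 (Mᵀ j)‖ := M.norm_det_le_prod_norm_col
    _ ≤ ∏ _j : ι, √(Fintype.card ι) * c := by gcongr with j; exact hcol j
    _ = (√(Fintype.card ι) * c) ^ Fintype.card ι := by simp

theorem Matrix.norm_fromCols_one_apply_le {𝕜 n m : Type*} [NormedRing 𝕜] [NormOneClass 𝕜]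
    [DecidableEq n] {C : Matrix n m 𝕜} {h : ℝ} (hh : 1 ≤ h) (hC : ∀ i j, ‖C i j‖ ≤ h)
    (i : n) (j : n ⊕ m) : ‖fromCols 1 C i j‖ ≤ h := by
  rcases j with j | j
  · rw [fromCols_apply_inl, one_apply]
    split_ifs <;> simp [hh, zero_le_one.trans hh]
  · exact hC i j

theorem Real.sqrt_pow_self_eq_rpow (x : ℕ) : √(x : ℝ) ^ x = (x : ℝ) ^ ((x : ℝ) / 2) := by
  rw [Real.sqrt_eq_rpow, ← Real.rpow_natCast, ← Real.rpow_mul (Nat.cast_nonneg x)]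
  ring_nf

/-- From locally h-maximal volume to globally (h^r r^{r/2})-maximal volume. -/
theorem stmt_11 {r s : ℕ} (U : Matrix (Fin r) (Fin r) ℂ) (V' : Matrix (Fin r) (Fin s) ℂ)
    (hU : IsUnit U) (h : ℝ) (hh : 1 ≤ h)
    (hloc : ∀ (j' : Fin r) (j : Fin s),
      vol (Matrix.updateCol U j' (fun i => V' i j)) ≤ h * vol U) :
    ∀ κ : Fin r ↪ (Fin r ⊕ Fin s),
      vol ((Matrix.fromCols U V').submatrix id ⇑κ)
        ≤ h ^ r * (r : ℝ) ^ ((r : ℝ) / 2) * vol U := by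
  intro κ
  have hdet : IsUnit U.det := (isUnit_iff_isUnit_det U).mp hU
  have hC : ∀ i j, ‖(U⁻¹ * V') i j‖ ≤ h := fun i j => by
    rw [inv_mul_apply_eq_det_updateCol_div, norm_div, div_le_iff₀ (norm_pos_iff.mpr hdet.ne_zero),
      ← vol_eq_norm_det, ← vol_eq_norm_det]
    exact hloc i j
  set N := (fromCols 1 (U⁻¹ * V')).submatrix id κ
  have hfactor : (fromCols U V').submatrix id κ = U * N := by
    rw [show U * N = (U * fromCols 1 (U⁻¹ * V')).submatrix id κ from rfl, mul_fromCols, mul_one,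
      mul_nonsing_inv_cancel_left _ _ hdet]
  have hN : ‖N.det‖ ≤ (√r * h) ^ r := by
    simpa only [Fintype.card_fin] using
      norm_det_le_of_forall_norm_le (M := N) fun i j => norm_fromCols_one_apply_le hh hC i (κ j)
  calc vol ((fromCols U V').submatrix id κ) = ‖U.det‖ * ‖N.det‖ := by
        rw [vol_eq_norm_det, hfactor, det_mul, norm_mul]
    _ ≤ ‖U.det‖ * (√r * h) ^ r := by gcongr
    _ = h ^ r * (r : ℝ) ^ ((r : ℝ) / 2) * vol U := by
        rw [mul_pow, Real.sqrt_pow_self_eq_rpow, vol_eq_norm_det]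
        ring
end
end

section
/- Let B = (A | b) be an r×(q+1) matrix with q < r, where A is r×q of full column rank and b ∈ C^r, and let U be a matrix whose columns form an orthonormal basis of the orthogonal complement of the column space of A. Then v₂(B) = v₂(A)·‖U*b‖, where v₂(M)² = det(M*M). -/
/-!
The Gram matrix of `B = (A | b)` has the Gram matrix `AᴴA` as its top-left block, so the Schur
complement formula gives `det (BᴴB) = det (AᴴA) · bᴴ (1 - A (AᴴA)⁻¹ Aᴴ) b`. The square matrix
`(A | U)` has the left inverse `((AᴴA)⁻¹ Aᴴ ; Uᴴ)`, which is then also a right inverse; this is the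
identity `1 - A (AᴴA)⁻¹ Aᴴ = U Uᴴ`, and it turns the Schur complement into `‖Uᴴ b‖²`.
-/

open Matrix BigOperators Finset

noncomputable section

namespace Matrix

variable {m n l : Type*} [Fintype m] [Fintype n] [DecidableEq n]

theorem isUnit_of_rank_eq_card {K : Type*} [Field K] {A : Matrix n n K}
    (hA : A.rank = Fintype.card n) : IsUnit A := by
  rw [← mulVec_surjective_iff_isUnit]
  have hrange : LinearMap.range A.mulVecLin = ⊤ :=
    Submodule.eq_top_of_finrank_eq (by rw [← rank, hA, Module.finrank_fintype_fun_eq_card])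
  exact LinearMap.range_eq_top.mp hrange

open ComplexOrder in
theorem isUnit_conjTranspose_mul_self_of_rank_eq_card {A : Matrix m n ℂ}
    (hA : A.rank = Fintype.card n) : IsUnit (Aᴴ * A) :=
  isUnit_of_rank_eq_card (by rw [rank_conjTranspose_mul_self, hA])

theorem det_mul_comm_of_card_eq {R : Type*} [CommRing R] [DecidableEq m]
    (M : Matrix m n R) (N : Matrix n m R) (h : Fintype.card m = Fintype.card n) :
    (M * N).det = (N * M).det := by
  let e : m ≃ n := Fintype.equivOfCardEq h
  calc (M * N).det = (M.submatrix id e * N.submatrix e id).det := by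
        rw [submatrix_mul_equiv]; rfl
    _ = (N.submatrix e id * M.submatrix id e).det := det_mul_comm _ _
    _ = ((N * M).submatrix e e).det := by rw [← submatrix_mul_equiv N M e (Equiv.refl m) e]; rfl
    _ = (N * M).det := det_submatrix_equiv_self e _

theorem det_conjTranspose_mul_self_replicateCol {𝕜 ι : Type*} [RCLike 𝕜] [Unique ι]
    (v : m → 𝕜) :
    ((replicateCol ι v)ᴴ * replicateCol ι v).det = ((∑ i, ‖v i‖ ^ 2 : ℝ) : 𝕜) := by
  rw [det_unique, conjTranspose_replicateCol, replicateRow_mul_replicateCol_apply]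
  push_cast
  exact Finset.sum_congr rfl fun i _ => RCLike.conj_mul (v i)

variable {R : Type*} [CommRing R] [StarRing R] [DecidableEq m] [Fintype l] [DecidableEq l]

theorem det_conjTranspose_mul_self_fromCols (A : Matrix m n R) (C : Matrix m l R)
    [Invertible (Aᴴ * A)] :
    ((fromCols A C)ᴴ * fromCols A C).det =
      (Aᴴ * A).det * (Cᴴ * (1 - A * ⅟(Aᴴ * A) * Aᴴ) * C).det := by
  rw [conjTranspose_fromCols_eq_fromRows_conjTranspose, fromRows_mul_fromCols, det_fromBlocks₁₁]
  simp only [Matrix.mul_sub, Matrix.sub_mul, Matrix.mul_one, Matrix.mul_assoc]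

theorem one_sub_mul_invOf_mul_conjTranspose_eq {k : Type*} [Fintype k] [DecidableEq k]
    (e : m ≃ n ⊕ k) (A : Matrix m n R) (U : Matrix m k R) [Invertible (Aᴴ * A)]
    (hU : Uᴴ * U = 1) (hUA : Uᴴ * A = 0) :
    1 - A * ⅟(Aᴴ * A) * Aᴴ = U * Uᴴ := by
  have hAU : Aᴴ * U = 0 := by simpa using congrArg conjTranspose hUA
  have hleft : fromRows (⅟(Aᴴ * A) * Aᴴ) Uᴴ * fromCols A U = 1 := by
    rw [fromRows_mul_fromCols, Matrix.mul_assoc, Matrix.mul_assoc, invOf_mul_self, hAU,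
      Matrix.mul_zero, hUA, hU, ← fromBlocks_one]
  have hright := (fromCols_mul_fromRows_eq_one_comm e A U _ Uᴴ).mpr hleft
  rw [fromCols_mul_fromRows, ← Matrix.mul_assoc] at hright
  exact sub_eq_of_eq_add' hright.symm

theorem det_conjTranspose_mul_self_fromCols_of_orthonormal_complement {k : Type*} [Fintype k]
    [DecidableEq k] (e : m ≃ n ⊕ k) {A : Matrix m n R} {U : Matrix m k R} [Invertible (Aᴴ * A)]
    (hU : Uᴴ * U = 1) (hUA : Uᴴ * A = 0) (C : Matrix m l R) :
    ((fromCols A C)ᴴ * fromCols A C).det = (Aᴴ * A).det * ((Uᴴ * C)ᴴ * (Uᴴ * C)).det := by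
  rw [det_conjTranspose_mul_self_fromCols, one_sub_mul_invOf_mul_conjTranspose_eq e A U hU hUA,
    conjTranspose_mul, conjTranspose_conjTranspose, Matrix.mul_assoc, Matrix.mul_assoc,
    Matrix.mul_assoc]

end Matrix

theorem vol_eq_sqrt_det_conjTranspose_mul_self {m n : Type*} [Fintype m] [Fintype n]
    [DecidableEq m] [DecidableEq n] (M : Matrix m n ℂ) (h : Fintype.card n ≤ Fintype.card m) :
    vol M = √(Mᴴ * M).det.re := by
  unfold vol
  split_ifs with h'
  · rw [det_mul_comm_of_card_eq M Mᴴ (le_antisymm h' h)]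
  · rfl

/-- Volume of a matrix with an appended column: v₂(A | b) = v₂(A)·‖U*b‖. -/
theorem stmt_13 {r q : ℕ} (hq : q < r)
    (A : Matrix (Fin r) (Fin q) ℂ) (b : Fin r → ℂ) (hA : A.rank = q)
    (U : Matrix (Fin r) (Fin (r - q)) ℂ)
    (hUorth : Uᴴ * U = 1) (hUA : Uᴴ * A = 0) :
    vol (Matrix.fromCols A (Matrix.of fun i (_ : Unit) => b i)) =
      vol A * Real.sqrt (∑ i, ‖(Uᴴ *ᵥ b) i‖ ^ 2) := by
  have : Invertible (Aᴴ * A) :=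
    (isUnit_conjTranspose_mul_self_of_rank_eq_card (by rwa [Fintype.card_fin])).invertible
  have hdet := det_conjTranspose_mul_self_fromCols_of_orthonormal_complement
    ((finCongr (by omega)).trans finSumFinEquiv.symm) hUorth hUA (replicateCol Unit b)
  rw [← replicateCol_mulVec, det_conjTranspose_mul_self_replicateCol,
    RCLike.ofReal_eq_complex_ofReal] at hdet
  have hB_tall : Fintype.card (Fin q ⊕ Unit) ≤ Fintype.card (Fin r) := by
    simpa [Fintype.card_sum] using hq
  rw [vol_eq_sqrt_det_conjTranspose_mul_self _ hB_tall,
    vol_eq_sqrt_det_conjTranspose_mul_self _ (by simpa using hq.le), ← replicateCol, hdet,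
    Complex.re_mul_ofReal, Real.sqrt_mul' _ (by positivity)]
end
end
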